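/- For the Wigner-Yanase skew information I_sk(ρ,A) := −(1/2)tr([√ρ, A]²) and the quantum Fisher information F(ρ,A) (as defined by the spectral formula), one has I_sk(ρ,A) ≤ (1/4)F(ρ,A) ≤ 2 I_sk(ρ,A). -/

import Mathlib

open Matrix Finset

/-- Quantum Fisher information via a spectral decomposition of `ρ`. -/
noncomputable def qfi {ι : Type*} [Fintype ι] (lam : ι → ℝ) (v : ι → ι → ℂ)
    (A : Matrix ι ι ℂ) : ℝ :=
  2 * ∑ a : ι, ∑ b : ι,
    if 0 < lam a + lam b then
      (lam a - lam b) ^ 2 / (lam a + lam b) * Complex.normSq (star (v a) ⬝ᵥ (A *ᵥ v b))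
    else 0

variable {n : ℕ}

lemma vmv_mul (x y : Fin n → ℂ) (B : Matrix (Fin n) (Fin n) ℂ) :
    vecMulVec x y * B = vecMulVec x (y ᵥ* B) := by
  ext i j
  simp only [vecMulVec_apply, mul_apply, vecMul, dotProduct, Finset.mul_sum]
  exact Finset.sum_congr rfl fun k _ => by ring

lemma mul_vmv (x y : Fin n → ℂ) (B : Matrix (Fin n) (Fin n) ℂ) :
    B * vecMulVec x y = vecMulVec (B *ᵥ x) y := by
  ext i j
  simp only [vecMulVec_apply, mul_apply, mulVec, dotProduct, Finset.sum_mul]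
  exact Finset.sum_congr rfl fun k _ => by ring

lemma vmv_mul_vmv (x y z w : Fin n → ℂ) :
    vecMulVec x y * vecMulVec z w = (y ⬝ᵥ z) • vecMulVec x w := by
  ext i j
  simp only [vecMulVec_apply, mul_apply, dotProduct, Matrix.smul_apply, smul_eq_mul, Finset.sum_mul]
  exact Finset.sum_congr rfl fun k _ => by ring

lemma trace_vmv (x y : Fin n → ℂ) : (vecMulVec x y).trace = y ⬝ᵥ x := by
  simp [Matrix.trace, Matrix.diag, vecMulVec_apply, dotProduct, mul_comm]

lemma trace_vmv_mul_vmv (x y z w : Fin n → ℂ) :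
    (vecMulVec x y * vecMulVec z w).trace = (y ⬝ᵥ z) * (w ⬝ᵥ x) := by
  rw [vmv_mul_vmv, trace_smul, trace_vmv, smul_eq_mul]

lemma completeness (v : Fin n → Fin n → ℂ)
    (hortho : ∀ a b, star (v a) ⬝ᵥ v b = if a = b then (1 : ℂ) else 0) :
    ∑ a, vecMulVec (v a) (star (v a)) = (1 : Matrix (Fin n) (Fin n) ℂ) := by
  set V : Matrix (Fin n) (Fin n) ℂ := Matrix.of (fun a i => star (v a i)) with hV
  have h1 : V * Vᴴ = 1 := by
    ext a b
    simpa [hV, mul_apply, conjTranspose_apply, dotProduct, Matrix.one_apply] using hortho a b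
  have h2 : Vᴴ * V = 1 := mul_eq_one_comm.mp h1
  ext i j
  have := congrFun (congrFun h2 i) j
  simpa [hV, mul_apply, conjTranspose_apply, Matrix.sum_apply, vecMulVec_apply,
    mul_comm] using this

lemma trace_comm_sq (A : Matrix (Fin n) (Fin n) ℂ) (v : Fin n → Fin n → ℂ)
    (hortho : ∀ a b, star (v a) ⬝ᵥ v b = if a = b then (1 : ℂ) else 0) (s : Fin n → ℝ) :
    (((∑ a, (s a : ℂ) • vecMulVec (v a) (star (v a))) * A
      - A * (∑ a, (s a : ℂ) • vecMulVec (v a) (star (v a))))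
     * ((∑ a, (s a : ℂ) • vecMulVec (v a) (star (v a))) * A
      - A * (∑ a, (s a : ℂ) • vecMulVec (v a) (star (v a))))).trace
    = ∑ a, ∑ b, ((2 * (s a * s b) - (s a ^ 2 + s b ^ 2) : ℝ) : ℂ)
        * ((star (v a) ⬝ᵥ (A *ᵥ v b)) * (star (v b) ⬝ᵥ (A *ᵥ v a))) := by
  set M : Fin n → Fin n → ℂ := fun a b => star (v a) ⬝ᵥ (A *ᵥ v b) with hMdef
  set X : Fin n → Matrix (Fin n) (Fin n) ℂ := fun a =>
    vecMulVec (v a) (star (v a) ᵥ* A) - vecMulVec (A *ᵥ v a) (star (v a)) with hX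
  have hC : (∑ a, (s a : ℂ) • vecMulVec (v a) (star (v a))) * A
      - A * (∑ a, (s a : ℂ) • vecMulVec (v a) (star (v a)))
      = ∑ a, (s a : ℂ) • X a := by
    rw [Matrix.sum_mul, Matrix.mul_sum, ← Finset.sum_sub_distrib]
    refine Finset.sum_congr rfl fun a _ => ?_
    rw [smul_mul_assoc, mul_smul_comm, ← smul_sub, vmv_mul, mul_vmv]
  -- trace of X a * X b
  have htX : ∀ a b, (X a * X b).trace
      = 2 * (M a b * M b a)
        - (if a = b then (1:ℂ) else 0) * ((star (v b) ⬝ᵥ (A *ᵥ (A *ᵥ v a)))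
            + (star (v a) ⬝ᵥ (A *ᵥ (A *ᵥ v b)))) := by
    intro a b
    have e1 : (star (v a) ᵥ* A) ⬝ᵥ v b = M a b := (dotProduct_mulVec _ _ _).symm
    have e2 : (star (v b) ᵥ* A) ⬝ᵥ v a = M b a := (dotProduct_mulVec _ _ _).symm
    have e3 : (star (v a) ᵥ* A) ⬝ᵥ (A *ᵥ v b) = star (v a) ⬝ᵥ (A *ᵥ (A *ᵥ v b)) :=
      (dotProduct_mulVec _ _ _).symm
    have e4 : (star (v b) ᵥ* A) ⬝ᵥ (A *ᵥ v a) = star (v b) ⬝ᵥ (A *ᵥ (A *ᵥ v a)) :=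
      (dotProduct_mulVec _ _ _).symm
    rw [hX]
    simp only [sub_mul, mul_sub, trace_sub]
    rw [trace_vmv_mul_vmv, trace_vmv_mul_vmv, trace_vmv_mul_vmv, trace_vmv_mul_vmv,
      e1, e2, e3, e4, hortho a b, hortho b a]
    by_cases h : a = b
    · subst h; ring
    · rw [if_neg h, if_neg (Ne.symm h)]; ring
  -- completeness: ⟨a|A²|a⟩ = Σ_b M a b M b a
  have hN : ∀ a, star (v a) ⬝ᵥ (A *ᵥ (A *ᵥ v a)) = ∑ b, M a b * M b a := by
    intro a
    have hAA : A * A = ∑ b, vecMulVec (A *ᵥ v b) (star (v b) ᵥ* A) := by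
      calc A * A = A * (∑ b, vecMulVec (v b) (star (v b))) * A := by
            rw [completeness v hortho, mul_one]
        _ = ∑ b, vecMulVec (A *ᵥ v b) (star (v b) ᵥ* A) := by
            rw [Matrix.mul_sum, Matrix.sum_mul]
            exact Finset.sum_congr rfl fun b _ => by rw [mul_vmv, vmv_mul]
    have : A *ᵥ (A *ᵥ v a) = (A * A) *ᵥ v a := mulVec_mulVec _ _ _
    have hsum : (∑ b, vecMulVec (A *ᵥ v b) (star (v b) ᵥ* A)) *ᵥ v a
        = ∑ b, (vecMulVec (A *ᵥ v b) (star (v b) ᵥ* A)) *ᵥ v a := by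
      ext i
      simp only [mulVec, dotProduct, Matrix.sum_apply, Finset.sum_apply, Finset.sum_mul]
      rw [Finset.sum_comm]
    have hdp : star (v a) ⬝ᵥ (∑ b, (vecMulVec (A *ᵥ v b) (star (v b) ᵥ* A)) *ᵥ v a)
        = ∑ b, star (v a) ⬝ᵥ ((vecMulVec (A *ᵥ v b) (star (v b) ᵥ* A)) *ᵥ v a) := by
      simp only [dotProduct, Finset.sum_apply, Finset.mul_sum]
      rw [Finset.sum_comm]
    rw [this, hAA, hsum, hdp]
    refine Finset.sum_congr rfl fun b _ => ?_
    have : vecMulVec (A *ᵥ v b) (star (v b) ᵥ* A) *ᵥ v a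
        = ((star (v b) ᵥ* A) ⬝ᵥ v a) • (A *ᵥ v b) := by
      ext i
      simp only [mulVec, vecMulVec_apply, dotProduct, Pi.smul_apply, smul_eq_mul,
        Finset.sum_mul]
      refine Finset.sum_congr rfl fun x _ => ?_
      rw [Finset.mul_sum]
      exact Finset.sum_congr rfl fun k _ => by ring
    rw [this, dotProduct_smul, smul_eq_mul, ← dotProduct_mulVec]
    ring
  rw [hC, Matrix.sum_mul]
  rw [trace_sum]
  have : ∀ a, (((s a : ℂ) • X a) * ∑ b, (s b : ℂ) • X b).trace
      = ∑ b, (s a : ℂ) * (s b : ℂ) * (X a * X b).trace := by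
    intro a
    rw [Matrix.mul_sum, trace_sum]
    refine Finset.sum_congr rfl fun b _ => ?_
    rw [smul_mul_assoc, mul_smul_comm, trace_smul, trace_smul]
    simp [mul_assoc]
  simp only [this, htX]
  -- now pure sum manipulation
  have row : ∀ a, ∑ b, (s a : ℂ) * (s b : ℂ) *
      (2 * (M a b * M b a) - (if a = b then (1:ℂ) else 0) *
        ((star (v b) ⬝ᵥ (A *ᵥ (A *ᵥ v a))) + (star (v a) ⬝ᵥ (A *ᵥ (A *ᵥ v b)))))
      = (∑ b, 2 * (s a : ℂ) * (s b : ℂ) * (M a b * M b a))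
        - 2 * ((s a : ℂ))^2 * (∑ b, M a b * M b a) := by
    intro a
    simp only [mul_sub]
    rw [Finset.sum_sub_distrib]
    congr 1
    · exact Finset.sum_congr rfl fun b _ => by ring
    · rw [Finset.sum_eq_single a]
      · rw [if_pos rfl, ← hN a]
        ring
      · intro b _ hb
        rw [if_neg (Ne.symm hb)]
        ring
      · intro h; exact absurd (Finset.mem_univ a) h
  simp only [row]
  rw [Finset.sum_sub_distrib]
  have symm2 : ∑ a, ∑ b, ((s b : ℂ))^2 * (M a b * M b a)
      = ∑ a, ∑ b, ((s a : ℂ))^2 * (M a b * M b a) := by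
    rw [Finset.sum_comm]
    exact Finset.sum_congr rfl fun b _ => Finset.sum_congr rfl fun a _ => by ring
  have hRHS : ∑ a, ∑ b, ((2 * (s a * s b) - (s a ^ 2 + s b ^ 2) : ℝ) : ℂ) * (M a b * M b a)
      = (∑ a, ∑ b, 2 * (s a : ℂ) * (s b : ℂ) * (M a b * M b a))
        - ((∑ a, ∑ b, ((s a : ℂ))^2 * (M a b * M b a))
          + (∑ a, ∑ b, ((s b : ℂ))^2 * (M a b * M b a))) := by
    rw [← Finset.sum_add_distrib, ← Finset.sum_sub_distrib]
    refine Finset.sum_congr rfl fun a _ => ?_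
    rw [← Finset.sum_add_distrib, ← Finset.sum_sub_distrib]
    refine Finset.sum_congr rfl fun b _ => ?_
    push_cast
    ring
  rw [hRHS, symm2]
  have : ∀ a, 2 * ((s a : ℂ))^2 * (∑ b, M a b * M b a)
      = ∑ b, 2 * ((s a : ℂ))^2 * (M a b * M b a) := fun a => Finset.mul_sum _ _ _
  simp only [this]
  rw [← Finset.sum_add_distrib]
  congr 1
  refine Finset.sum_congr rfl fun a _ => ?_
  rw [← Finset.sum_add_distrib]
  exact Finset.sum_congr rfl fun b _ => by ring

lemma scalar_ineq (la lb : ℝ) (ha : 0 ≤ la) (hb : 0 ≤ lb) :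
    (Real.sqrt la - Real.sqrt lb) ^ 2 ≤
      (if 0 < la + lb then (la - lb) ^ 2 / (la + lb) else 0) ∧
    (if 0 < la + lb then (la - lb) ^ 2 / (la + lb) else 0) ≤
      2 * (Real.sqrt la - Real.sqrt lb) ^ 2 := by
  set x := Real.sqrt la with hx
  set y := Real.sqrt lb with hy
  have hx0 : 0 ≤ x := Real.sqrt_nonneg la
  have hy0 : 0 ≤ y := Real.sqrt_nonneg lb
  have hxa : x ^ 2 = la := Real.sq_sqrt ha
  have hyb : y ^ 2 = lb := Real.sq_sqrt hb
  by_cases h : 0 < la + lb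
  · simp only [if_pos h]
    constructor
    · rw [le_div_iff₀ h]
      nlinarith [mul_nonneg (mul_nonneg hx0 hy0) (sq_nonneg (x - y))]
    · rw [div_le_iff₀ h]
      nlinarith [sq_nonneg ((x - y) ^ 2)]
  · have h1 : la = 0 := by linarith [not_lt.mp h, ha, hb]
    have h2 : lb = 0 := by linarith [not_lt.mp h]
    simp [if_neg h, hx, hy, h1, h2]

/-- the Wigner-Yanase skew information
`I_sk(ρ,A) := -(1/2) tr([√ρ,A]²)` (with `√ρ := ∑_a √λ_a |ψ_a⟩⟨ψ_a|`) and the quantum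
Fisher information satisfy `I_sk(ρ,A) ≤ (1/4) F(ρ,A) ≤ 2 I_sk(ρ,A)`. -/
theorem skew_le_qfi_le_twice_skew {n : ℕ} (ρ A : Matrix (Fin n) (Fin n) ℂ)
    (hA : A.IsHermitian) (lam : Fin n → ℝ) (v : Fin n → Fin n → ℂ)
    (hortho : ∀ a b, star (v a) ⬝ᵥ v b = if a = b then (1 : ℂ) else 0)
    (hlam : ∀ a, 0 ≤ lam a) (hsum : ∑ a, lam a = 1)
    (hdec : ρ = ∑ a, (lam a : ℂ) • Matrix.vecMulVec (v a) (star (v a))) :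
    let sqrtρ : Matrix (Fin n) (Fin n) ℂ :=
      ∑ a, ((Real.sqrt (lam a) : ℝ) : ℂ) • Matrix.vecMulVec (v a) (star (v a))
    let Isk : ℝ :=
      (-(1 / 2) * Matrix.trace ((sqrtρ * A - A * sqrtρ) * (sqrtρ * A - A * sqrtρ))).re
    Isk ≤ (1 / 4) * qfi lam v A ∧ (1 / 4) * qfi lam v A ≤ 2 * Isk := by
  intro sqrtρ Isk
  set s : Fin n → ℝ := fun a => Real.sqrt (lam a) with hs
  set M : Fin n → Fin n → ℂ := fun a b => star (v a) ⬝ᵥ (A *ᵥ v b) with hMdef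
  -- Hermitian conjugation of matrix elements
  have hMconj : ∀ a b, M b a = starRingEnd ℂ (M a b) := by
    intro a b
    have h1 : starRingEnd ℂ (M a b) = star (A *ᵥ v b) ⬝ᵥ v a := by
      rw [hMdef]
      simp only [dotProduct, Pi.star_apply, map_sum, _root_.map_mul, RingHom.coe_coe]
      exact Finset.sum_congr rfl fun i _ => by
        simp [mul_comm, RCLike.star_def]
    rw [h1, star_mulVec, hA.eq]
    show star (v b) ⬝ᵥ (A *ᵥ v a) = (star (v b) ᵥ* A) ⬝ᵥ v a
    exact dotProduct_mulVec _ _ _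
  have hMM : ∀ a b, M a b * M b a = ((Complex.normSq (M a b) : ℝ) : ℂ) := by
    intro a b
    rw [hMconj a b, Complex.mul_conj]
  set N : Fin n → Fin n → ℝ := fun a b => Complex.normSq (M a b) with hNdef
  have hNnn : ∀ a b, 0 ≤ N a b := fun a b => Complex.normSq_nonneg _
  set T : ℝ := ∑ a, ∑ b, (2 * (s a * s b) - (s a ^ 2 + s b ^ 2)) * N a b with hT
  -- the trace identity
  have htr : Matrix.trace ((sqrtρ * A - A * sqrtρ) * (sqrtρ * A - A * sqrtρ))
      = ((T : ℝ) : ℂ) := by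
    have := trace_comm_sq A v hortho s
    rw [this, hT]
    push_cast
    refine Finset.sum_congr rfl fun a _ => ?_
    refine Finset.sum_congr rfl fun b _ => ?_
    rw [hMM a b]
  have hIsk : Isk = (1 / 2) * ∑ a, ∑ b, (s a - s b) ^ 2 * N a b := by
    have e0 : Isk = (-(1 / 2 : ℂ) *
        Matrix.trace ((sqrtρ * A - A * sqrtρ) * (sqrtρ * A - A * sqrtρ))).re := rfl
    rw [e0, htr]
    have e1 : (-(1 / 2 : ℂ)) * ((T : ℝ) : ℂ) = (((-(1 / 2) * T : ℝ)) : ℂ) := by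
      push_cast; ring
    rw [e1, Complex.ofReal_re, hT]
    have e2 : ∑ a, ∑ b, (s a - s b) ^ 2 * N a b
        = -∑ a, ∑ b, (2 * (s a * s b) - (s a ^ 2 + s b ^ 2)) * N a b := by
      rw [← Finset.sum_neg_distrib]
      refine Finset.sum_congr rfl fun a _ => ?_
      rw [← Finset.sum_neg_distrib]
      exact Finset.sum_congr rfl fun b _ => by ring
    rw [e2]; ring
  have hqfi : (1 / 4) * qfi lam v A = (1 / 2) * ∑ a, ∑ b,
      (if 0 < lam a + lam b then (lam a - lam b) ^ 2 / (lam a + lam b) else 0) * N a b := by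
    rw [qfi]
    simp only [ite_mul, zero_mul]
    rw [hNdef]
    ring
  have hterm := fun a b => scalar_ineq (lam a) (lam b) (hlam a) (hlam b)
  constructor
  · rw [hIsk, hqfi]
    refine mul_le_mul_of_nonneg_left ?_ (by norm_num)
    refine Finset.sum_le_sum fun a _ => Finset.sum_le_sum fun b _ => ?_
    exact mul_le_mul_of_nonneg_right ((hterm a b).1) (hNnn a b)
  · rw [hIsk, hqfi]
    have h2 : ∑ a, ∑ b,
        (if 0 < lam a + lam b then (lam a - lam b) ^ 2 / (lam a + lam b) else 0) * N a b
        ≤ ∑ a, ∑ b, 2 * ((s a - s b) ^ 2 * N a b) := by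
      refine Finset.sum_le_sum fun a _ => Finset.sum_le_sum fun b _ => ?_
      calc _ ≤ 2 * (s a - s b) ^ 2 * N a b :=
            mul_le_mul_of_nonneg_right ((hterm a b).2) (hNnn a b)
        _ = 2 * ((s a - s b) ^ 2 * N a b) := by ring
    have h3 : ∑ a, ∑ b, 2 * ((s a - s b) ^ 2 * N a b)
        = 2 * ∑ a, ∑ b, (s a - s b) ^ 2 * N a b := by
      rw [Finset.mul_sum]
      exact Finset.sum_congr rfl fun a _ => (Finset.mul_sum _ _ _).symm
    rw [h3] at h2
    linarith
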